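/- arXiv:1101.4903 — 4 statements merged into one kernel-verified Lean document; each statement's English description precedes it below -/
import Mathlib

section
/- Let r > 0 and let φ : ℝ → ℝ be convex on the interval [0, r+1]. Then the function ψ(ρ) = ρ·φ(ρ+1) + (r−ρ)·φ(ρ) is convex on the interval [0, r]. -/
lemma unit_incr {r : ℝ} {φ : ℝ → ℝ}
    (hφ : ConvexOn ℝ (Set.Icc 0 (r + 1)) φ) {x y : ℝ}
    (hx : x ∈ Set.Icc (0:ℝ) r) (hy : y ∈ Set.Icc (0:ℝ) r) (hxy : x ≤ y) :
    φ (x + 1) + φ y ≤ φ x + φ (y + 1) := by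
  rcases eq_or_lt_of_le hxy with rfl | hlt
  · linarith
  · set d : ℝ := y + 1 - x with hd
    have hd0 : 0 < d := by rw [hd]; linarith
    have hxm : x ∈ Set.Icc (0:ℝ) (r + 1) := ⟨hx.1, by linarith [hx.2]⟩
    have hym : y + 1 ∈ Set.Icc (0:ℝ) (r + 1) := ⟨by linarith [hy.1], by linarith [hy.2]⟩
    have hl : (0:ℝ) ≤ (y - x) / d := div_nonneg (by linarith) hd0.le
    have hm : (0:ℝ) ≤ 1 / d := div_nonneg zero_le_one hd0.le
    have hlm : (y - x) / d + 1 / d = 1 := by field_simp; linarith [hd]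
    have h1 := hφ.2 hxm hym hl hm hlm
    have h2 := hφ.2 hxm hym hm hl (by linarith)
    rw [smul_eq_mul, smul_eq_mul, smul_eq_mul, smul_eq_mul] at h1 h2
    have e1 : (y - x) / d * x + 1 / d * (y + 1) = x + 1 := by
      field_simp; ring
    have e2 : 1 / d * x + (y - x) / d * (y + 1) = y := by
      field_simp; ring
    rw [e1] at h1
    rw [e2] at h2
    have hs : (y - x) / d * φ x + 1 / d * φ (y + 1) + (1 / d * φ x + (y - x) / d * φ (y + 1))
        = φ x + φ (y + 1) := by linear_combination (φ x + φ (y + 1)) * hlm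
    linarith

theorem psi_convex (r : ℝ) (hr : 0 < r) (φ : ℝ → ℝ)
    (hφ : ConvexOn ℝ (Set.Icc 0 (r + 1)) φ) :
    ConvexOn ℝ (Set.Icc 0 r) (fun ρ => ρ * φ (ρ + 1) + (r - ρ) * φ ρ) := by
  constructor
  · exact convex_Icc 0 r
  · intro x hx y hy a b ha hb hab
    obtain rfl : b = 1 - a := by linarith
    simp only [smul_eq_mul]
    have hxm : x ∈ Set.Icc (0:ℝ) (r + 1) := ⟨hx.1, by linarith [hx.2]⟩
    have hym : y ∈ Set.Icc (0:ℝ) (r + 1) := ⟨hy.1, by linarith [hy.2]⟩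
    have hx1m : x + 1 ∈ Set.Icc (0:ℝ) (r + 1) := ⟨by linarith [hx.1], by linarith [hx.2]⟩
    have hy1m : y + 1 ∈ Set.Icc (0:ℝ) (r + 1) := ⟨by linarith [hy.1], by linarith [hy.2]⟩
    have hρ0 : 0 ≤ a * x + (1 - a) * y :=
      add_nonneg (mul_nonneg ha hx.1) (mul_nonneg hb hy.1)
    have hρr : a * x + (1 - a) * y ≤ r := by nlinarith [hx.2, hy.2]
    have h1 := hφ.2 hx1m hy1m ha hb hab
    have h2 := hφ.2 hxm hym ha hb hab
    rw [smul_eq_mul, smul_eq_mul, smul_eq_mul, smul_eq_mul] at h1 h2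
    have e1 : a * (x + 1) + (1 - a) * (y + 1) = a * x + (1 - a) * y + 1 := by ring
    rw [e1] at h1
    have hkey : 0 ≤ a * (1 - a) * (y - x) * (φ (y + 1) + φ x - φ (x + 1) - φ y) := by
      rcases le_total x y with hle | hle
      · have hki := unit_incr hφ hx hy hle
        have h0 : 0 ≤ a * (1 - a) * (y - x) :=
          mul_nonneg (mul_nonneg ha hb) (by linarith)
        nlinarith [hki, h0]
      · have hki := unit_incr hφ hy hx hle
        have h0 : 0 ≤ a * (1 - a) * (x - y) :=
          mul_nonneg (mul_nonneg ha hb) (by linarith)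
        nlinarith [hki, h0]
    linarith [mul_le_mul_of_nonneg_left h1 hρ0,
              mul_le_mul_of_nonneg_left h2 (by linarith : (0:ℝ) ≤ r - (a * x + (1 - a) * y)),
              hkey]
end

section
/- Fix reals 0 ≤ θ₁ < θ₂ ≤ L and p_j, p_k > 0 with p_j + p_k ≤ 1. Let Z be Bernoulli with success probability p_k/(p_j + p_k), and define Z₁ = θ₁·p_k + Z·(L − θ₂ + (θ₂−θ₁)(p_j + p_k)) and Z₂ = θ₂·p_k + Z·(L − θ₂). Then E[Z₁] = E[Z₂] and Z₂ ≤_cx Z₁ in the convex order. -/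
open MeasureTheory

theorem bernoulli_cx_two_weights {Ω : Type*} [MeasurableSpace Ω] (μ : Measure Ω)
    [IsProbabilityMeasure μ] (Z : Ω → ℝ) (hZm : Measurable Z)
    (pj pk θ₁ θ₂ L : ℝ) (hpj : 0 < pj) (hpk : 0 < pk) (hsum : pj + pk ≤ 1)
    (h0 : 0 ≤ θ₁) (h12 : θ₁ < θ₂) (h2L : θ₂ ≤ L)
    (hval : ∀ ω, Z ω = 0 ∨ Z ω = 1)
    (hZ1 : μ {ω | Z ω = 1} = ENNReal.ofReal (pk / (pj + pk))) :
    (∫ ω, (θ₁ * pk + Z ω * (L - θ₂ + (θ₂ - θ₁) * (pj + pk))) ∂μ =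
      ∫ ω, (θ₂ * pk + Z ω * (L - θ₂)) ∂μ) ∧
    (∀ φ : ℝ → ℝ, ConvexOn ℝ Set.univ φ →
      Integrable (fun ω => φ (θ₂ * pk + Z ω * (L - θ₂))) μ →
      Integrable (fun ω => φ (θ₁ * pk + Z ω * (L - θ₂ + (θ₂ - θ₁) * (pj + pk)))) μ →
      ∫ ω, φ (θ₂ * pk + Z ω * (L - θ₂)) ∂μ ≤
        ∫ ω, φ (θ₁ * pk + Z ω * (L - θ₂ + (θ₂ - θ₁) * (pj + pk))) ∂μ) := by
  have hpjk : 0 < pj + pk := by linarith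
  set q : ℝ := pk / (pj + pk) with hq_def
  have hq0 : 0 < q := div_pos hpk hpjk
  have hq1 : q ≤ 1 := by
    rw [div_le_one hpjk]; linarith
  set A : Set Ω := {ω | Z ω = 1} with hA_def
  have hA : MeasurableSet A := hZm (measurableSet_singleton 1)
  have htA : (μ A).toReal = q := by
    rw [hZ1, ENNReal.toReal_ofReal hq0.le]
  have htAc : (μ Aᶜ).toReal = 1 - q := by
    rw [measure_compl hA (measure_ne_top μ A), measure_univ, hZ1]
    rw [ENNReal.toReal_sub_of_le (by simpa using ENNReal.ofReal_le_one.mpr hq1)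
      (by simp)]
    simp [ENNReal.toReal_ofReal hq0.le]
  have key : ∀ c d : ℝ, ∫ ω, (if Z ω = 1 then d else c) ∂μ = (1 - q) * c + q * d := by
    intro c d
    have heq : (fun ω => if Z ω = 1 then d else c)
        = fun ω => A.indicator (fun _ => d) ω + Aᶜ.indicator (fun _ => c) ω := by
      funext ω
      by_cases h : Z ω = 1 <;> simp [hA_def, Set.indicator, h]
    rw [heq, integral_add ((integrable_const d).indicator hA)
      ((integrable_const c).indicator hA.compl),
      integral_indicator_const _ hA, integral_indicator_const _ hA.compl, measureReal_def, measureReal_def, htA, htAc]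
    simp [smul_eq_mul]; ring
  have hgen : ∀ g : ℝ → ℝ, ∀ e m : ℝ,
      ∫ ω, g (e + Z ω * m) ∂μ = (1 - q) * g e + q * g (e + m) := by
    intro g e m
    have : ∀ ω, g (e + Z ω * m) = if Z ω = 1 then g (e + m) else g e := by
      intro ω
      rcases hval ω with h | h <;> simp [h]
    rw [show (fun ω => g (e + Z ω * m)) = fun ω => if Z ω = 1 then g (e + m) else g e
      from funext this]
    exact key _ _
  have hqpk : q * (pj + pk) = pk := div_mul_cancel₀ pk hpjk.ne'
  constructor
  · rw [hgen (fun x => x) (θ₁ * pk) (L - θ₂ + (θ₂ - θ₁) * (pj + pk)),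
      hgen (fun x => x) (θ₂ * pk) (L - θ₂)]
    nlinarith [hqpk]
  · intro φ hφ _ _
    rw [hgen φ (θ₁ * pk) (L - θ₂ + (θ₂ - θ₁) * (pj + pk)), hgen φ (θ₂ * pk) (L - θ₂)]
    set a1 : ℝ := θ₁ * pk
    set b1 : ℝ := θ₁ * pk + (L - θ₂ + (θ₂ - θ₁) * (pj + pk))
    set a2 : ℝ := θ₂ * pk
    set b2 : ℝ := θ₂ * pk + (L - θ₂)
    set D : ℝ := L - θ₂ + (θ₂ - θ₁) * (pj + pk) with hD_def
    have hD : 0 < D := by nlinarith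
    set s : ℝ := (θ₂ - θ₁) * pk / D with hs_def
    set t : ℝ := (L - θ₂ + (θ₂ - θ₁) * pk) / D with ht_def
    have hs0 : 0 ≤ s := by
      apply div_nonneg _ hD.le; nlinarith
    have hs1 : s ≤ 1 := by
      rw [hs_def, div_le_one hD]; nlinarith
    have ht0 : 0 ≤ t := by
      apply div_nonneg _ hD.le; nlinarith
    have ht1 : t ≤ 1 := by
      rw [ht_def, div_le_one hD]; nlinarith
    have ha2 : a2 = (1 - s) * a1 + s * b1 := by
      have hsD : s * D = (θ₂ - θ₁) * pk := div_mul_cancel₀ _ hD.ne'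
      show θ₂ * pk = (1 - s) * (θ₁ * pk) + s * (θ₁ * pk + D)
      linear_combination (-1 : ℝ) * hsD
    have hb2 : b2 = (1 - t) * a1 + t * b1 := by
      have htD : t * D = L - θ₂ + (θ₂ - θ₁) * pk := div_mul_cancel₀ _ hD.ne'
      show θ₂ * pk + (L - θ₂) = (1 - t) * (θ₁ * pk) + t * (θ₁ * pk + D)
      linear_combination (-1 : ℝ) * htD
    have hca : φ a2 ≤ (1 - s) * φ a1 + s * φ b1 := by
      have := hφ.2 (Set.mem_univ a1) (Set.mem_univ b1) (by linarith : (0:ℝ) ≤ 1 - s)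
        hs0 (by ring)
      simpa [smul_eq_mul, ← ha2] using this
    have hcb : φ b2 ≤ (1 - t) * φ a1 + t * φ b1 := by
      have := hφ.2 (Set.mem_univ a1) (Set.mem_univ b1) (by linarith : (0:ℝ) ≤ 1 - t)
        ht0 (by ring)
      simpa [smul_eq_mul, ← hb2] using this
    have hcoef : (1 - q) * s + q * t = q := by
      rw [hs_def, ht_def, hq_def]
      field_simp
      ring
    have h1 : (1 - q) * φ a2 + q * φ b2 ≤
        (1 - q) * ((1 - s) * φ a1 + s * φ b1) + q * ((1 - t) * φ a1 + t * φ b1) := by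
      have h1q : 0 ≤ 1 - q := by linarith
      gcongr
    have h2 : (1 - q) * ((1 - s) * φ a1 + s * φ b1) + q * ((1 - t) * φ a1 + t * φ b1)
        = (1 - q) * φ a1 + q * φ b1 := by
      linear_combination (φ b1 - φ a1) * hcoef
    linarith
end

section
/- Consider the two-armed Dirichlet bandit value function W defined recursively: for measures α₁, α₂ on ℝ with finite means and discount sequence A_n = (a₁,...,a_n) with a_i ≥ 0, W(α₁, α₂; A₁) = a₁·max(μ₁, μ₂) where μ_i is the mean of the normalized measure α_i/α_i(ℝ), and for n ≥ 2, W(α₁, α₂; A_n) = max(W¹, W²) where W¹ = a₁μ₁ + E[W(α₁ + δ_X, α₂; (a₂,...,a_n)) | X ~ α₁/α₁(ℝ)] and symmetrically for W². Then for finitely supported α₁, α₂, finite measure α, u, v ∈ ℝ and r > 0, the function ρ ↦ W(α + ρδ_u + (r−ρ)δ_v, α₂; A_n) is convex on [0, r]. -/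
/-- Total mass of a finitely supported (signed) measure on ℝ. -/
noncomputable def fmass (α : ℝ →₀ ℝ) : ℝ := α.sum fun _ w => w

/-- Mean of the normalized measure α / α(ℝ). -/
noncomputable def fmean (α : ℝ →₀ ℝ) : ℝ := (α.sum fun x w => w * x) / fmass α

/-- Value function of the two-armed Dirichlet bandit with finitely supported priors,
defined by backward induction on the discount sequence.  Pulling arm i with prior αᵢ
yields an observation X distributed as αᵢ/αᵢ(ℝ) and updates the prior to αᵢ + δ_X. -/
noncomputable def bW : (ℝ →₀ ℝ) → (ℝ →₀ ℝ) → List ℝ → ℝ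
  | _, _, [] => 0
  | α₁, α₂, a :: as =>
      max (a * fmean α₁ +
            (α₁.sum fun x w => w * bW (α₁ + Finsupp.single x 1) α₂ as) / fmass α₁)
          (a * fmean α₂ +
            (α₂.sum fun y w => w * bW α₁ (α₂ + Finsupp.single y 1) as) / fmass α₂)

open Finsupp Set



lemma fmass_add (f g : ℝ →₀ ℝ) : fmass (f + g) = fmass f + fmass g :=
  Finsupp.sum_add_index' (fun _ => rfl) (fun _ _ _ => rfl)

lemma fmass_single (x c : ℝ) : fmass (Finsupp.single x c) = c :=
  Finsupp.sum_single_index rfl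

lemma fmass_nonneg {α : ℝ →₀ ℝ} (h : ∀ x, 0 ≤ α x) : 0 ≤ fmass α :=
  Finset.sum_nonneg fun x _ => h x

lemma coords_add_single {α : ℝ →₀ ℝ} (h : ∀ x, 0 ≤ α x) (y : ℝ) :
    ∀ x, 0 ≤ (α + Finsupp.single y (1:ℝ)) x := by
  intro x
  rw [Finsupp.add_apply]
  have h2 : (0:ℝ) ≤ Finsupp.single y (1:ℝ) x := by
    rw [Finsupp.single_apply]; split <;> norm_num
  linarith [h x]

lemma sum_decomp (α : ℝ →₀ ℝ) (u v ρ c : ℝ) (F : ℝ → ℝ) :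
    (α + Finsupp.single u ρ + Finsupp.single v c).sum (fun x w => w * F x)
      = α.sum (fun x w => w * F x) + ρ * F u + c * F v := by
  rw [Finsupp.sum_add_index' (by simp) (by intros; ring),
      Finsupp.sum_add_index' (by simp) (by intros; ring),
      Finsupp.sum_single_index (by simp), Finsupp.sum_single_index (by simp)]

lemma fmean_decomp (α : ℝ →₀ ℝ) (u v ρ c : ℝ) :
    (α + Finsupp.single u ρ + Finsupp.single v c).sum (fun x w => w * x)
      = α.sum (fun x w => w * x) + ρ * u + c * v :=
  sum_decomp α u v ρ c (fun x => x)

lemma fmass_decomp (α : ℝ →₀ ℝ) (u v ρ c : ℝ) :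
    fmass (α + Finsupp.single u ρ + Finsupp.single v c) = fmass α + ρ + c := by
  unfold fmass
  rw [Finsupp.sum_add_index' (fun _ => rfl) (fun _ _ _ => rfl),
      Finsupp.sum_add_index' (fun _ => rfl) (fun _ _ _ => rfl),
      Finsupp.sum_single_index rfl, Finsupp.sum_single_index rfl]

lemma convexOn_affine {s : Set ℝ} (hs : Convex ℝ s) (c d : ℝ) :
    ConvexOn ℝ s (fun x => c * x + d) := by
  refine ⟨hs, fun x hx y hy a b ha hb hab => ?_⟩
  simp only [smul_eq_mul]
  exact le_of_eq (by linear_combination (-d) * hab)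

lemma convexOn_finset_sum {ι : Type*} (t : Finset ι) {s : Set ℝ} (hs : Convex ℝ s)
    (f : ι → ℝ → ℝ) (h : ∀ i ∈ t, ConvexOn ℝ s (f i)) :
    ConvexOn ℝ s (fun x => ∑ i ∈ t, f i x) := by
  classical
  induction t using Finset.cons_induction with
  | empty => simpa using convexOn_const 0 hs
  | cons i t hit ih =>
      simp only [Finset.sum_cons]
      exact (h i (Finset.mem_cons_self _ _)).add
        (ih fun j hj => h j (Finset.mem_cons_of_mem hj))

lemma convex_incr {s : Set ℝ} {f : ℝ → ℝ} (hf : ConvexOn ℝ s f)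
    {x y : ℝ} (hx : x ∈ s) (hy1 : y + 1 ∈ s) (hxy : x ≤ y) :
    f (x + 1) + f y ≤ f x + f (y + 1) := by
  have hd1 : 1 ≤ y + 1 - x := by linarith
  have hd0 : 0 < y + 1 - x := by linarith
  set d := y + 1 - x with hd
  have hθ0 : 0 ≤ 1 / d := by positivity
  have hθ1 : 1 / d ≤ 1 := by rw [div_le_one hd0]; linarith
  have h1 := hf.2 hx hy1 (by linarith : (0:ℝ) ≤ 1 - 1/d) hθ0 (by ring : (1 - 1/d) + 1/d = 1)
  have h2 := hf.2 hx hy1 hθ0 (by linarith : (0:ℝ) ≤ 1 - 1/d) (by ring : 1/d + (1 - 1/d) = 1)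
  rw [smul_eq_mul, smul_eq_mul, smul_eq_mul, smul_eq_mul] at h1 h2
  have e1 : (1 - 1/d) * x + (1/d) * (y + 1) = x + 1 := by
    field_simp
    ring
  have e2 : (1/d) * x + (1 - 1/d) * (y + 1) = y := by
    field_simp
    ring
  rw [e1] at h1
  rw [e2] at h2
  linarith

lemma kconvex {r : ℝ} {f : ℝ → ℝ} (hr : 0 ≤ r)
    (hf : ConvexOn ℝ (Icc 0 (r+1)) f) :
    ConvexOn ℝ (Icc 0 r) (fun ρ => ρ * f (ρ + 1) + (r - ρ) * f ρ) := by
  refine ⟨convex_Icc 0 r, ?_⟩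
  rintro s ⟨hs0, hsr⟩ t ⟨ht0, htr⟩ lam mu hlam hmu hsum
  simp only [smul_eq_mul]
  have hl : lam = 1 - mu := by linarith
  subst hl
  have hρ0 : 0 ≤ (1 - mu) * s + mu * t := by nlinarith
  have hρr : (1 - mu) * s + mu * t ≤ r := by nlinarith
  have hsm : s ∈ Icc (0:ℝ) (r+1) := ⟨hs0, by linarith⟩
  have htm : t ∈ Icc (0:ℝ) (r+1) := ⟨ht0, by linarith⟩
  have hsm1 : s + 1 ∈ Icc (0:ℝ) (r+1) := ⟨by linarith, by linarith⟩
  have htm1 : t + 1 ∈ Icc (0:ℝ) (r+1) := ⟨by linarith, by linarith⟩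
  have h1 := hf.2 hsm1 htm1 hlam hmu hsum
  have h2 := hf.2 hsm htm hlam hmu hsum
  rw [smul_eq_mul, smul_eq_mul, smul_eq_mul, smul_eq_mul] at h1 h2
  rw [show (1-mu) * (s+1) + mu * (t+1) = ((1-mu) * s + mu * t) + 1 by ring] at h1
  -- multiply by nonneg coefficients
  have h1' := mul_le_mul_of_nonneg_left h1 hρ0
  have h2' := mul_le_mul_of_nonneg_left h2 (by linarith : (0:ℝ) ≤ r - ((1-mu)*s + mu*t))
  rcases le_total s t with hst | hst
  · have hincr := convex_incr hf hsm htm1 hst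
    nlinarith [mul_nonneg (mul_nonneg (mul_nonneg (by linarith : (0:ℝ) ≤ 1 - mu) hmu)
      (by linarith : (0:ℝ) ≤ t - s)) (by linarith : (0:ℝ) ≤ f (t+1) - f (s+1) + f s - f t)]
  · have hincr := convex_incr hf htm hsm1 hst
    nlinarith [mul_nonneg (mul_nonneg (mul_nonneg (by linarith : (0:ℝ) ≤ 1 - mu) hmu)
      (by linarith : (0:ℝ) ≤ s - t)) (by linarith : (0:ℝ) ≤ f (s+1) - f (t+1) + f t - f s)]

lemma bW_aux (A : List ℝ) :
    ∀ (α α₂ : ℝ →₀ ℝ), (∀ x, 0 ≤ α x) → (∀ x, 0 ≤ α₂ x) → 0 < fmass α₂ →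
    ∀ (u v r : ℝ), 0 < r → (∀ a ∈ A, 0 ≤ a) →
    ConvexOn ℝ (Set.Icc 0 r)
      (fun ρ => bW (α + Finsupp.single u ρ + Finsupp.single v (r - ρ)) α₂ A) := by
  induction A with
  | nil =>
      intro α α₂ hα hα₂ hα₂m u v r hr hA
      simpa [bW] using convexOn_const (0:ℝ) (convex_Icc 0 r)
  | cons a as IH =>
      intro α α₂ hα hα₂ hα₂m u v r hr hA
      have hAs : ∀ b ∈ as, 0 ≤ b := fun b hb => hA b (List.mem_cons_of_mem _ hb)
      have hMα : 0 ≤ fmass α := fmass_nonneg hα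
      have hM0 : 0 < fmass α + r := by linarith
      -- arm 1
      have h1 : ConvexOn ℝ (Set.Icc 0 r) (fun ρ =>
          a * fmean (α + Finsupp.single u ρ + Finsupp.single v (r-ρ)) +
          ((α + Finsupp.single u ρ + Finsupp.single v (r-ρ)).sum fun x w =>
              w * bW ((α + Finsupp.single u ρ + Finsupp.single v (r-ρ)) + Finsupp.single x 1) α₂ as) /
            fmass (α + Finsupp.single u ρ + Finsupp.single v (r-ρ))) := by
        have heq : (fun ρ =>
            a * fmean (α + Finsupp.single u ρ + Finsupp.single v (r-ρ)) +
            ((α + Finsupp.single u ρ + Finsupp.single v (r-ρ)).sum fun x w =>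
                w * bW ((α + Finsupp.single u ρ + Finsupp.single v (r-ρ)) + Finsupp.single x 1) α₂ as) /
              fmass (α + Finsupp.single u ρ + Finsupp.single v (r-ρ)))
            = (fun ρ => (1 / (fmass α + r)) *
              (((a * u - a * v) * ρ + (a * v * r + a * (α.sum fun x w => w * x))) +
               ((∑ x ∈ α.support, α x *
                    bW ((α + Finsupp.single x 1) + Finsupp.single u ρ + Finsupp.single v (r-ρ)) α₂ as) +
                (ρ * bW (α + Finsupp.single u (ρ+1) + Finsupp.single v ((r+1)-(ρ+1))) α₂ as +
                 (r - ρ) * bW (α + Finsupp.single u ρ + Finsupp.single v ((r+1)-ρ)) α₂ as)))) := by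
          funext ρ
          have hMM : fmass α + ρ + (r - ρ) = fmass α + r := by ring
          have eu : (α + Finsupp.single u ρ + Finsupp.single v (r-ρ)) + Finsupp.single u 1
              = α + Finsupp.single u (ρ+1) + Finsupp.single v ((r+1)-(ρ+1)) := by
            rw [show (r+1)-(ρ+1) = r - ρ by ring, Finsupp.single_add]
            abel
          have ev : (α + Finsupp.single u ρ + Finsupp.single v (r-ρ)) + Finsupp.single v 1
              = α + Finsupp.single u ρ + Finsupp.single v ((r+1)-ρ) := by
            rw [show (r+1)-ρ = (r - ρ) + 1 by ring, Finsupp.single_add]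
            abel
          rw [fmean, fmass_decomp, fmean_decomp, hMM,
              sum_decomp α u v ρ (r-ρ)
                (fun x => bW ((α + Finsupp.single u ρ + Finsupp.single v (r-ρ)) + Finsupp.single x 1) α₂ as),
              eu, ev]
          have hsc : (α.sum fun x w =>
                w * bW ((α + Finsupp.single u ρ + Finsupp.single v (r-ρ)) + Finsupp.single x 1) α₂ as)
              = ∑ x ∈ α.support, α x *
                    bW ((α + Finsupp.single x 1) + Finsupp.single u ρ + Finsupp.single v (r-ρ)) α₂ as := by
            refine Finset.sum_congr rfl fun x _ => ?_
            dsimp only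
            rw [show (α + Finsupp.single u ρ + Finsupp.single v (r-ρ)) + Finsupp.single x 1
                = (α + Finsupp.single x 1) + Finsupp.single u ρ + Finsupp.single v (r-ρ) by abel]
          rw [hsc]
          field_simp
          ring
        rw [heq]
        refine ConvexOn.smul (one_div_nonneg.mpr hM0.le) ?_
        refine ConvexOn.add ?_ (ConvexOn.add ?_ ?_)
        · exact convexOn_affine (convex_Icc 0 r) _ _
        · refine convexOn_finset_sum α.support (convex_Icc 0 r) _ fun x _ => ?_
          exact ConvexOn.smul (hα x)
            (IH (α + Finsupp.single x 1) α₂ (coords_add_single hα x) hα₂ hα₂m u v r hr hAs)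
        · exact kconvex hr.le (IH α α₂ hα hα₂ hα₂m u v (r+1) (by linarith) hAs)
      -- arm 2
      have h2 : ConvexOn ℝ (Set.Icc 0 r) (fun ρ =>
          a * fmean α₂ +
          (α₂.sum fun y w =>
              w * bW (α + Finsupp.single u ρ + Finsupp.single v (r-ρ)) (α₂ + Finsupp.single y 1) as) /
            fmass α₂) := by
        have heq : (fun ρ =>
            a * fmean α₂ +
            (α₂.sum fun y w =>
                w * bW (α + Finsupp.single u ρ + Finsupp.single v (r-ρ)) (α₂ + Finsupp.single y 1) as) /
              fmass α₂)
            = (fun ρ => a * fmean α₂ + (1 / fmass α₂) *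
                ∑ y ∈ α₂.support, α₂ y *
                  bW (α + Finsupp.single u ρ + Finsupp.single v (r-ρ)) (α₂ + Finsupp.single y 1) as) := by
          funext ρ
          rw [Finsupp.sum]
          ring
        rw [heq]
        refine ConvexOn.add (convexOn_const _ (convex_Icc 0 r)) ?_
        refine ConvexOn.smul (one_div_nonneg.mpr hα₂m.le) ?_
        refine convexOn_finset_sum α₂.support (convex_Icc 0 r) _ fun y _ => ?_
        refine ConvexOn.smul (hα₂ y) ?_
        refine IH α (α₂ + Finsupp.single y 1) hα (coords_add_single hα₂ y) ?_ u v r hr hAs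
        rw [fmass_add, fmass_single]
        linarith
      simp only [bW]
      exact h1.sup h2

theorem bW_convex_in_mass_split (α α₂ : ℝ →₀ ℝ)
    (hα : ∀ x, 0 ≤ α x) (hα₂ : ∀ x, 0 ≤ α₂ x) (hα₂m : 0 < fmass α₂)
    (u v r : ℝ) (hr : 0 < r) (A : List ℝ) (hA : ∀ a ∈ A, 0 ≤ a) :
    ConvexOn ℝ (Set.Icc 0 r)
      (fun ρ => bW (α + Finsupp.single u ρ + Finsupp.single v (r - ρ)) α₂ A) := by
  exact bW_aux A α α₂ hα hα₂ hα₂m u v r hr hA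
end

section
/- For the two-armed Dirichlet bandit value function W (defined by backward induction with finitely supported priors), if M > 0 and F ≤_icx F̃ are finitely supported probability distributions on ℝ, then W(M·F, α₂; A_n) ≤ W(M·F̃, α₂; A_n) for every finite nonnull finitely supported measure α₂ and every discount sequence A_n with nonnegative entries. -/
/-- Increasing convex order for finitely supported probability distributions on ℝ. -/
def Ficx (F G : ℝ →₀ ℝ) : Prop :=
  ∀ φ : ℝ → ℝ, Monotone φ → ConvexOn ℝ Set.univ φ →
    (F.sum fun x w => w * φ x) ≤ (G.sum fun x w => w * φ x)

/-! Helper lemmas -/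

lemma fmass_add_single (α : ℝ →₀ ℝ) (z c : ℝ) :
    fmass (α + Finsupp.single z c) = fmass α + c := by
  unfold fmass
  rw [Finsupp.sum_add_index' (fun _ => rfl) (fun _ _ _ => rfl), Finsupp.sum_single_index rfl]

lemma nonneg_add_single {α : ℝ →₀ ℝ} (h : ∀ x, 0 ≤ α x) {c : ℝ} (hc : 0 ≤ c) (z : ℝ) :
    ∀ x, 0 ≤ (α + Finsupp.single z c) x := by
  intro x
  rw [Finsupp.add_apply, Finsupp.single_apply]
  split_ifs with hzx
  · exact add_nonneg (h x) hc
  · simpa using h x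

lemma sum_update (α : ℝ →₀ ℝ) (x k : ℝ) (G : ℝ → ℝ) :
    ((α + Finsupp.single x k).sum fun z w => w * G z)
      = (α.sum fun z w => w * G z) + k * G x := by
  rw [Finsupp.sum_add_index' (h := fun z w => w * G z) (fun z => zero_mul _)
      (fun z b₁ b₂ => add_mul _ _ _),
    Finsupp.sum_single_index (h := fun z w => w * G z) (zero_mul _)]

/-- Monotone and convex on the whole line. -/
def MC (g : ℝ → ℝ) : Prop := Monotone g ∧ ConvexOn ℝ Set.univ g

lemma MC_const (c : ℝ) : MC fun _ => c := ⟨monotone_const, convexOn_const c convex_univ⟩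

lemma MC.add {f g : ℝ → ℝ} (hf : MC f) (hg : MC g) : MC fun x => f x + g x :=
  ⟨hf.1.add hg.1, hf.2.add hg.2⟩

lemma MC.smul {c : ℝ} {f : ℝ → ℝ} (hc : 0 ≤ c) (hf : MC f) : MC fun x => c * f x :=
  ⟨fun _ _ h => mul_le_mul_of_nonneg_left (hf.1 h) hc,
   by simpa [smul_eq_mul] using hf.2.smul hc⟩

lemma MC.div_const {c : ℝ} {f : ℝ → ℝ} (hf : MC f) (hc : 0 < c) : MC fun x => f x / c := by
  have := MC.smul (c := c⁻¹) (by positivity) hf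
  simpa [div_eq_inv_mul] using this

lemma MC.max {f g : ℝ → ℝ} (hf : MC f) (hg : MC g) : MC fun x => max (f x) (g x) :=
  ⟨hf.1.max hg.1, hf.2.sup hg.2⟩

lemma MC_affine (c : ℝ) {d : ℝ} (hd : 0 ≤ d) : MC fun x => c + d * x :=
  (MC_const c).add (MC.smul hd ⟨monotone_id, convexOn_id convex_univ⟩)

lemma MC.sum {ι : Type*} {s : Finset ι} {g : ι → ℝ → ℝ} (h : ∀ i ∈ s, MC (g i)) :
    MC fun x => ∑ i ∈ s, g i x := by
  classical
  induction s using Finset.induction_on with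
  | empty => simpa using MC_const 0
  | insert _ _ hi ih =>
      simp only [Finset.sum_insert hi]
      exact (h _ (Finset.mem_insert_self _ _)).add
        (ih fun i hi' => h i (Finset.mem_insert_of_mem hi'))

/-! Monotone convexity of `x ↦ bW (α₁ + k δ_x) α₂ A`. -/

lemma bW_MC (A : List ℝ) : (∀ a ∈ A, 0 ≤ a) → ∀ (k : ℝ), 0 ≤ k → ∀ α₁ α₂ : ℝ →₀ ℝ,
    (∀ x, 0 ≤ α₁ x) → 0 < fmass α₁ → (∀ x, 0 ≤ α₂ x) → 0 < fmass α₂ →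
    MC fun x : ℝ => bW (α₁ + Finsupp.single x k) α₂ A := by
  induction A with
  | nil => intros; simpa [bW] using MC_const 0
  | cons a as ih =>
    intro hA k hk α₁ α₂ h1 hm1 h2 hm2
    have ha : 0 ≤ a := hA a (by simp)
    have has : ∀ b ∈ as, 0 ≤ b := fun b hb => hA b (by simp [hb])
    have hmk : 0 < fmass α₁ + k := by linarith
    have key : (fun x : ℝ => bW (α₁ + Finsupp.single x k) α₂ (a :: as)) =
      fun x => max
        (a * (((α₁.sum fun z w => w * z) + k * x) / (fmass α₁ + k)) +
          ((α₁.sum fun z w =>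
              w * bW ((α₁ + Finsupp.single z 1) + Finsupp.single x k) α₂ as) +
            k * bW (α₁ + Finsupp.single x (k + 1)) α₂ as) / (fmass α₁ + k))
        (a * fmean α₂ +
          (α₂.sum fun y w =>
            w * bW (α₁ + Finsupp.single x k) (α₂ + Finsupp.single y 1) as) / fmass α₂) := by
      funext x
      have e1 : fmass (α₁ + Finsupp.single x k) = fmass α₁ + k := fmass_add_single α₁ x k
      have e2 : fmean (α₁ + Finsupp.single x k)
          = ((α₁.sum fun z w => w * z) + k * x) / (fmass α₁ + k) := by
        unfold fmean
        rw [e1, sum_update α₁ x k (fun z => z)]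
      have e3 : ((α₁ + Finsupp.single x k).sum fun z w =>
            w * bW ((α₁ + Finsupp.single x k) + Finsupp.single z 1) α₂ as)
          = (α₁.sum fun z w =>
              w * bW ((α₁ + Finsupp.single z 1) + Finsupp.single x k) α₂ as) +
            k * bW (α₁ + Finsupp.single x (k + 1)) α₂ as := by
        rw [sum_update]
        congr 1
        · refine Finsupp.sum_congr fun z _ => ?_
          rw [add_right_comm]
        · rw [add_assoc, ← Finsupp.single_add]
      show max _ _ = _
      rw [e1, e2, e3]
    rw [key]
    apply MC.max
    · apply MC.add
      · exact MC.smul ha ((MC_affine _ hk).div_const hmk)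
      · apply MC.div_const _ hmk
        apply MC.add
        · show MC fun x : ℝ => ∑ z ∈ α₁.support,
            α₁ z * bW ((α₁ + Finsupp.single z 1) + Finsupp.single x k) α₂ as
          exact MC.sum fun z _ => MC.smul (h1 z)
            (ih has k hk (α₁ + Finsupp.single z 1) α₂
              (nonneg_add_single h1 zero_le_one z)
              (by rw [fmass_add_single]; linarith) h2 hm2)
        · exact MC.smul hk (ih has (k + 1) (by linarith) α₁ α₂ h1 hm1 h2 hm2)
    · apply (MC_const (a * fmean α₂)).add
      apply MC.div_const _ hm2
      show MC fun x : ℝ => ∑ y ∈ α₂.support,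
        α₂ y * bW (α₁ + Finsupp.single x k) (α₂ + Finsupp.single y 1) as
      exact MC.sum fun y _ => MC.smul (h2 y)
        (ih has k hk α₁ (α₂ + Finsupp.single y 1) h1 hm1
          (nonneg_add_single h2 zero_le_one y)
          (by rw [fmass_add_single]; linarith))

/-! Main comparison lemma. -/

lemma bW_le (A : List ℝ) : (∀ a ∈ A, 0 ≤ a) → ∀ α₁ α₁' α₂ : ℝ →₀ ℝ,
    (∀ x, 0 ≤ α₁ x) → (∀ x, 0 ≤ α₁' x) → 0 < fmass α₁ → fmass α₁' = fmass α₁ →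
    (∀ φ : ℝ → ℝ, Monotone φ → ConvexOn ℝ Set.univ φ →
      (α₁.sum fun x w => w * φ x) ≤ (α₁'.sum fun x w => w * φ x)) →
    (∀ x, 0 ≤ α₂ x) → 0 < fmass α₂ → bW α₁ α₂ A ≤ bW α₁' α₂ A := by
  induction A with
  | nil => intros; simp [bW]
  | cons a as ih =>
    intro hA α₁ α₁' α₂ h1 h1' hm1 hmeq hicx h2 hm2
    have ha : 0 ≤ a := hA a (by simp)
    have has : ∀ b ∈ as, 0 ≤ b := fun b hb => hA b (by simp [hb])
    show max _ _ ≤ max _ _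
    apply max_le_max
    · -- arm 1 branch
      have hmean : fmean α₁ ≤ fmean α₁' := by
        unfold fmean
        rw [hmeq]
        gcongr
        exact hicx (fun x => x) monotone_id (convexOn_id convex_univ)
      apply add_le_add (mul_le_mul_of_nonneg_left hmean ha)
      rw [hmeq]
      gcongr (?_ : ℝ) / _
      calc (α₁.sum fun x w => w * bW (α₁ + Finsupp.single x 1) α₂ as)
          ≤ α₁.sum fun x w => w * bW (α₁' + Finsupp.single x 1) α₂ as := by
            apply Finset.sum_le_sum
            intro x _
            apply mul_le_mul_of_nonneg_left _ (h1 x)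
            apply ih has _ _ α₂ (nonneg_add_single h1 zero_le_one x)
              (nonneg_add_single h1' zero_le_one x)
              (by rw [fmass_add_single]; linarith)
              (by rw [fmass_add_single, fmass_add_single, hmeq]) _ h2 hm2
            intro φ hφm hφc
            rw [sum_update, sum_update]
            exact add_le_add_left (hicx φ hφm hφc) _
        _ ≤ α₁'.sum fun x w => w * bW (α₁' + Finsupp.single x 1) α₂ as := by
            have hmc := bW_MC as has 1 zero_le_one α₁' α₂ h1' (hmeq ▸ hm1) h2 hm2
            exact hicx _ hmc.1 hmc.2
    · -- arm 2 branch
      apply add_le_add_right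
      gcongr (?_ : ℝ) / _
      apply Finset.sum_le_sum
      intro y _
      apply mul_le_mul_of_nonneg_left _ (h2 y)
      exact ih has α₁ α₁' (α₂ + Finsupp.single y 1) h1 h1' hm1 hmeq hicx
        (nonneg_add_single h2 zero_le_one y) (by rw [fmass_add_single]; linarith)

lemma fmass_smul (M : ℝ) (F : ℝ →₀ ℝ) : fmass (M • F) = M * fmass F := by
  unfold fmass
  rw [Finsupp.sum_smul_index' (h := fun _ w => w) (fun _ => rfl)]
  simp [Finsupp.mul_sum, smul_eq_mul]

lemma sum_smul_phi (M : ℝ) (F : ℝ →₀ ℝ) (φ : ℝ → ℝ) :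
    ((M • F).sum fun x w => w * φ x) = M * F.sum fun x w => w * φ x := by
  rw [Finsupp.sum_smul_index' (h := fun x w => w * φ x) (fun i => zero_mul _), Finsupp.mul_sum]
  exact Finsupp.sum_congr fun x _ => by simp [smul_eq_mul, mul_assoc]

theorem bW_mono_icx (M : ℝ) (hM : 0 < M) (F F' α₂ : ℝ →₀ ℝ)
    (hF : ∀ x, 0 ≤ F x) (hF1 : fmass F = 1)
    (hF' : ∀ x, 0 ≤ F' x) (hF'1 : fmass F' = 1)
    (hicx : Ficx F F')
    (hα₂ : ∀ x, 0 ≤ α₂ x) (hα₂m : 0 < fmass α₂)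
    (A : List ℝ) (hA : ∀ a ∈ A, 0 ≤ a) :
    bW (M • F) α₂ A ≤ bW (M • F') α₂ A := by
  apply bW_le A hA (M • F) (M • F') α₂ _ _ _ _ _ hα₂ hα₂m
  · intro x
    simpa [smul_eq_mul] using mul_nonneg hM.le (hF x)
  · intro x
    simpa [smul_eq_mul] using mul_nonneg hM.le (hF' x)
  · rw [fmass_smul, hF1]; simpa using hM
  · rw [fmass_smul, fmass_smul, hF1, hF'1]
  · intro φ hφm hφc
    rw [sum_smul_phi, sum_smul_phi]
    exact mul_le_mul_of_nonneg_left (hicx φ hφm hφc) hM.le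
end
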